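/- Let L ≥ the largest eigenvalue of AᵀA (equivalently L ≥ ‖A‖₂², the squared operator norm), L > 0, and define the ISTA map T(x) = ST(x + (1/L)Aᵀ(y − Ax), λ/L). Then for every x ∈ ℝ^n, P(T(x)) ≤ P(x) − (L/2)‖T(x) − x‖₂² (sufficient decrease of one ISTA step). -/
import Mathlib


/-- The soft-thresholding operator, defined componentwise by
`ST(v,θ)_i = sign(v_i) · max(|v_i| − θ, 0)`. -/
noncomputable def softThreshold {n : ℕ} (v : Fin n → ℝ) (θ : ℝ) : Fin n → ℝ :=
  fun i => Real.sign (v i) * max (|v i| - θ) 0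

/-- The Lasso objective `P(x) = (1/2)‖y − Ax‖₂² + λ‖x‖₁`. -/
noncomputable def lassoObj {m n : ℕ} (A : Matrix (Fin m) (Fin n) ℝ) (y : Fin m → ℝ)
    (lam : ℝ) (x : Fin n → ℝ) : ℝ :=
  (1 / 2) * ∑ i, (y i - A.mulVec x i) ^ 2 + lam * ∑ i, |x i|

/-- The ISTA map `T(x) = ST(x + (1/L)Aᵀ(y − Ax), λ/L)`. -/
noncomputable def istaMap {m n : ℕ} (A : Matrix (Fin m) (Fin n) ℝ) (y : Fin m → ℝ)
    (lam L : ℝ) (x : Fin n → ℝ) : Fin n → ℝ :=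
  softThreshold (x + (1 / L) • A.transpose.mulVec (y - A.mulVec x)) (lam / L)

/-- Prox inequality for scalar soft-thresholding. -/
lemma st_key (θ u v : ℝ) (hθ : 0 ≤ θ) :
    θ * |Real.sign v * max (|v| - θ) 0| +
      (Real.sign v * max (|v| - θ) 0 - u) * (Real.sign v * max (|v| - θ) 0 - v)
      ≤ θ * |u| := by
  have hu1 : u ≤ |u| := le_abs_self u
  have hu2 : -|u| ≤ u := neg_abs_le u
  rcases lt_trichotomy v 0 with hv | hv | hv
  · rw [Real.sign_of_neg hv, abs_of_neg hv]
    rcases le_or_gt (-v - θ) 0 with h | h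
    · rw [max_eq_right h]
      simp only [mul_zero, neg_mul, zero_sub, abs_zero]
      nlinarith
    · rw [max_eq_left h.le, abs_of_nonpos (by nlinarith : (-1 : ℝ) * (-v - θ) ≤ 0)]
      nlinarith
  · subst hv; simp; positivity
  · rw [Real.sign_of_pos hv, abs_of_pos hv]
    rcases le_or_gt (v - θ) 0 with h | h
    · rw [max_eq_right h]
      simp only [mul_zero, one_mul, zero_sub, abs_zero]
      nlinarith
    · rw [max_eq_left h.le, abs_of_nonneg (by nlinarith : (0:ℝ) ≤ 1 * (v - θ))]
      nlinarith

/-- Sufficient decrease of one ISTA step: if `L > 0` dominates the largest eigenvalue of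
`AᵀA` (i.e. `‖Ax‖₂² ≤ L‖x‖₂²` for all `x`), then
`P(T(x)) ≤ P(x) − (L/2)‖T(x) − x‖₂²` for every `x`. -/
theorem ista_sufficient_decrease {m n : ℕ} (A : Matrix (Fin m) (Fin n) ℝ)
    (y : Fin m → ℝ) (lam : ℝ) (hlam : 0 ≤ lam) (L : ℝ) (hL : 0 < L)
    (hLbound : ∀ x : Fin n → ℝ, ∑ i, (A.mulVec x i) ^ 2 ≤ L * ∑ i, (x i) ^ 2)
    (x : Fin n → ℝ) :
    lassoObj A y lam (istaMap A y lam L x) ≤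
      lassoObj A y lam x - (L / 2) * ∑ i, (istaMap A y lam L x i - x i) ^ 2 := by
  set z : Fin n → ℝ := istaMap A y lam L x with hz
  set h : Fin n → ℝ := A.transpose.mulVec (y - A.mulVec x) with hh
  set w : Fin n → ℝ := x + (1 / L) • h with hw
  have hwi : ∀ i, w i = x i + (1 / L) * h i := by
    intro i; simp [hw]
  have hzi : ∀ i, z i = Real.sign (w i) * max (|w i| - lam / L) 0 := by
    intro i; rfl
  set d : Fin n → ℝ := fun i => z i - x i with hd
  -- abbreviations
  set Sz : ℝ := ∑ i, |z i| with hSz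
  set Sx : ℝ := ∑ i, |x i| with hSx
  set Q : ℝ := ∑ i, (d i) ^ 2 with hQ
  set G : ℝ := ∑ i, d i * h i with hG
  set R : ℝ := ∑ j, (A.mulVec d j) ^ 2 with hR
  -- adjoint identity
  have adj : ∑ j, A.mulVec d j * (y j - A.mulVec x j) = G := by
    rw [hG]
    simp only [Matrix.mulVec, dotProduct, Matrix.transpose_apply, hh,
      Finset.sum_mul, Finset.mul_sum, Pi.sub_apply]
    rw [Finset.sum_comm]
    exact Finset.sum_congr rfl fun i _ => Finset.sum_congr rfl fun j _ => by ring
  -- F3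
  have F3 : R ≤ L * Q := hLbound d
  -- F2 : quadratic expansion
  have hdz : ∀ j, A.mulVec z j = A.mulVec x j + A.mulVec d j := by
    intro j
    have : z = x + d := by funext i; simp [hd]
    rw [this, Matrix.mulVec_add]; simp
  have F2 : ∑ j, (y j - A.mulVec z j) ^ 2
      = ∑ j, (y j - A.mulVec x j) ^ 2 - 2 * G + R := by
    have : ∑ j, (y j - A.mulVec z j) ^ 2
        = ∑ j, ((y j - A.mulVec x j) ^ 2
            - 2 * (A.mulVec d j * (y j - A.mulVec x j)) + (A.mulVec d j) ^ 2) := by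
      refine Finset.sum_congr rfl fun j _ => ?_
      rw [hdz j]; ring
    rw [this, Finset.sum_add_distrib, Finset.sum_sub_distrib, ← Finset.mul_sum, adj, hR]
  -- F1 from the prox inequality
  have F1 : lam / L * Sz + (Q - (1 / L) * G) ≤ lam / L * Sx := by
    have key : ∀ i, lam / L * |z i| + d i * (d i - (1 / L) * h i) ≤ lam / L * |x i| := by
      intro i
      have hθ : 0 ≤ lam / L := div_nonneg hlam hL.le
      have := st_key (lam / L) (x i) (w i) hθ
      rw [← hzi i] at this
      have e : z i - w i = d i - (1 / L) * h i := by rw [hwi i, hd]; ring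
      calc lam / L * |z i| + d i * (d i - (1 / L) * h i)
          = lam / L * |z i| + (z i - x i) * (z i - w i) := by rw [← e, hd]
        _ ≤ lam / L * |x i| := this
    calc lam / L * Sz + (Q - (1 / L) * G)
        = ∑ i, (lam / L * |z i| + d i * (d i - (1 / L) * h i)) := by
          rw [hSz, hQ, hG, Finset.mul_sum, Finset.mul_sum, ← Finset.sum_sub_distrib,
            ← Finset.sum_add_distrib]
          exact Finset.sum_congr rfl fun i _ => by ring
      _ ≤ ∑ i, lam / L * |x i| := Finset.sum_le_sum fun i _ => key i
      _ = lam / L * Sx := by rw [hSx, Finset.mul_sum]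
  have F1' : lam * Sz + L * Q - G ≤ lam * Sx := by
    have := mul_le_mul_of_nonneg_left F1 hL.le
    have hLne : L ≠ 0 := hL.ne'
    field_simp at this
    nlinarith [this]
  -- conclude
  simp only [lassoObj]
  rw [F2]
  change 1 / 2 * (∑ j, (y j - A.mulVec x j) ^ 2 - 2 * G + R) + lam * Sz ≤
    1 / 2 * ∑ j, (y j - A.mulVec x j) ^ 2 + lam * Sx - L / 2 * Q
  linarith
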